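/- arXiv:1704.00846 — 3 statements merged into one kernel-verified Lean document; each statement's English description precedes it below -/
import Mathlib

section
/- Let p and d be coprime positive integers. For integers x, y, z the following are equivalent: (i) there exist signs s, t ∈ {1, −1} such that p·(x + s·z) + d·(x + t·y) = 0; (ii) there exist k ∈ ℕ, n ∈ ℤ and signs s₁, s₂, s₃ ∈ {1, −1} such that x = s₁·n, y = s₂·(n + k·p) and z = s₃·(n − k·d). -/
/-- For `ζ = p/d` with `p, d` coprime positive integers, a ρ-shifted integral weight
`(x, y, z)` is atypical (i.e., `p(x + sz) + d(x + ty) = 0` for some signs `s, t ∈ {1, -1}`)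
if and only if it lies in some `WT_k`, i.e., it is of the form
`(s₁ n, s₂ (n + kp), s₃ (n - kd))` for some `k ∈ ℕ`, `n ∈ ℤ` and signs `s₁, s₂, s₃`. -/
theorem atypical_iff_mem_WT (p d : ℤ) (hp : 0 < p) (hd : 0 < d) (hpd : IsCoprime p d)
    (x y z : ℤ) :
    (∃ s t : ℤ, (s = 1 ∨ s = -1) ∧ (t = 1 ∨ t = -1) ∧
      p * (x + s * z) + d * (x + t * y) = 0) ↔
    (∃ (k : ℕ) (n : ℤ) (s₁ s₂ s₃ : ℤ), (s₁ = 1 ∨ s₁ = -1) ∧ (s₂ = 1 ∨ s₂ = -1) ∧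
      (s₃ = 1 ∨ s₃ = -1) ∧ x = s₁ * n ∧ y = s₂ * (n + (k : ℤ) * p) ∧
      z = s₃ * (n - (k : ℤ) * d)) := by
  constructor
  · rintro ⟨s, t, hs, ht, h⟩
    have hs2 : s * s = 1 := by rcases hs with rfl | rfl <;> norm_num
    have ht2 : t * t = 1 := by rcases ht with rfl | rfl <;> norm_num
    have hdvd : d ∣ x + s * z := by
      have h1 : d ∣ p * (x + s * z) := ⟨-(x + t * y), by linarith⟩
      exact (IsCoprime.symm hpd).dvd_of_dvd_mul_left h1
    obtain ⟨m, hm⟩ := hdvd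
    have hv : x + t * y = -(p * m) := by
      have hd0 : d ≠ 0 := hd.ne'
      have : d * (x + t * y) = d * (-(p * m)) := by
        rw [hm] at h; ring_nf; ring_nf at h; linarith
      exact mul_left_cancel₀ hd0 this
    have hy : y = t * (-(p * m) - x) := by linear_combination t * hv - y * ht2
    have hz : z = s * (d * m - x) := by linear_combination s * hm - z * hs2
    rcases le_or_gt 0 m with hm0 | hm0
    · refine ⟨m.toNat, x, 1, -t, -s, Or.inl rfl, ?_, ?_, by ring, ?_, ?_⟩
      · rcases ht with rfl | rfl <;> norm_num
      · rcases hs with rfl | rfl <;> norm_num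
      · rw [Int.toNat_of_nonneg hm0]; linear_combination hy
      · rw [Int.toNat_of_nonneg hm0]; linear_combination hz
    · refine ⟨(-m).toNat, -x, -1, t, s, Or.inr rfl, ht, hs, by ring, ?_, ?_⟩
      · rw [Int.toNat_of_nonneg (by linarith : (0:ℤ) ≤ -m)]; linear_combination hy
      · rw [Int.toNat_of_nonneg (by linarith : (0:ℤ) ≤ -m)]; linear_combination hz
  · rintro ⟨k, n, s₁, s₂, s₃, h1, h2, h3, rfl, rfl, rfl⟩
    refine ⟨-(s₁ * s₃), -(s₁ * s₂), ?_, ?_, ?_⟩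
    · rcases h1 with rfl | rfl <;> rcases h3 with rfl | rfl <;> norm_num
    · rcases h1 with rfl | rfl <;> rcases h2 with rfl | rfl <;> norm_num
    · rcases h1 with rfl | rfl <;> rcases h2 with rfl | rfl <;> rcases h3 with rfl | rfl <;> ring
end

section
/- Let p and d be positive integers, let k, ℓ ∈ ℕ, let n, m ∈ ℤ, and let s₁, s₂, s₃, t₁, t₂, t₃ ∈ {1, −1}. If (s₁·n, s₂·(n + k·p), s₃·(n − k·d)) = (t₁·m, t₂·(m + ℓ·p), t₃·(m − ℓ·d)) as triples of integers, then k = ℓ. -/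
/-- The sets `WT_k` are pairwise disjoint: if a weight of the form
`(s₁ n, s₂ (n + kp), s₃ (n - kd))` equals one of the form
`(t₁ m, t₂ (m + ℓp), t₃ (m - ℓd))`, then `k = ℓ`. -/
theorem WT_disjoint (p d : ℤ) (hp : 0 < p) (hd : 0 < d) (k ℓ : ℕ) (n m : ℤ)
    (s₁ s₂ s₃ t₁ t₂ t₃ : ℤ)
    (hs₁ : s₁ = 1 ∨ s₁ = -1) (hs₂ : s₂ = 1 ∨ s₂ = -1) (hs₃ : s₃ = 1 ∨ s₃ = -1)
    (ht₁ : t₁ = 1 ∨ t₁ = -1) (ht₂ : t₂ = 1 ∨ t₂ = -1) (ht₃ : t₃ = 1 ∨ t₃ = -1)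
    (h : (s₁ * n, s₂ * (n + (k : ℤ) * p), s₃ * (n - (k : ℤ) * d)) =
         (t₁ * m, t₂ * (m + (ℓ : ℤ) * p), t₃ * (m - (ℓ : ℤ) * d))) :
    k = ℓ := by
  obtain ⟨h1, h2, h3⟩ : s₁ * n = t₁ * m ∧ s₂ * (n + (k : ℤ) * p) = t₂ * (m + (ℓ : ℤ) * p) ∧
      s₃ * (n - (k : ℤ) * d) = t₃ * (m - (ℓ : ℤ) * d) := by
    simpa [Prod.ext_iff] using h
  have sq : ∀ s : ℤ, s = 1 ∨ s = -1 → s ^ 2 = 1 := by rintro s (rfl | rfl) <;> ring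
  have e1 : n ^ 2 = m ^ 2 := by
    have := congrArg (· ^ 2) h1
    simpa [mul_pow, sq s₁ hs₁, sq t₁ ht₁] using this
  have e2 : (n + (k : ℤ) * p) ^ 2 = (m + (ℓ : ℤ) * p) ^ 2 := by
    have := congrArg (· ^ 2) h2
    simpa [mul_pow, sq s₂ hs₂, sq t₂ ht₂] using this
  have e3 : (n - (k : ℤ) * d) ^ 2 = (m - (ℓ : ℤ) * d) ^ 2 := by
    have := congrArg (· ^ 2) h3
    simpa [mul_pow, sq s₃ hs₃, sq t₃ ht₃] using this
  have key : (k : ℤ) ^ 2 * (p * d * (p + d)) = (ℓ : ℤ) ^ 2 * (p * d * (p + d)) := by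
    have : d * (n + (k : ℤ) * p) ^ 2 + p * (n - (k : ℤ) * d) ^ 2 - (p + d) * n ^ 2 =
        d * (m + (ℓ : ℤ) * p) ^ 2 + p * (m - (ℓ : ℤ) * d) ^ 2 - (p + d) * m ^ 2 := by
      rw [e1, e2, e3]
    have lk : d * (n + (k : ℤ) * p) ^ 2 + p * (n - (k : ℤ) * d) ^ 2 - (p + d) * n ^ 2 =
        (k : ℤ) ^ 2 * (p * d * (p + d)) := by ring
    have ll : d * (m + (ℓ : ℤ) * p) ^ 2 + p * (m - (ℓ : ℤ) * d) ^ 2 - (p + d) * m ^ 2 =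
        (ℓ : ℤ) ^ 2 * (p * d * (p + d)) := by ring
    linarith
  have hpos : (0 : ℤ) < p * d * (p + d) := by positivity
  have : (k : ℤ) ^ 2 = (ℓ : ℤ) ^ 2 := mul_right_cancel₀ (ne_of_gt hpos) key
  have hn : k ^ 2 = ℓ ^ 2 := by exact_mod_cast this
  exact Nat.pow_left_injective (by norm_num) hn
end

section
/- Let ζ ∈ ℂ with ζ ≠ 0 and ζ ≠ −1, and let P_ζ = ∏_{s,t ∈ {1,−1}} ((1+ζ)·X₁ + s·X₂ + t·ζ·X₃), a polynomial in three variables X₁, X₂, X₃ over ℂ. Suppose f = (f₁, f₂, f₃) and g = (g₁, g₂, g₃) in ℂ³ satisfy P_ζ(f) ≠ 0, P_ζ(g) ≠ 0, and g ≠ (s₁f₁, s₂f₂, s₃f₃) for every choice of signs s₁, s₂, s₃ ∈ {1, −1}. Then there exists a polynomial h lying in the ℂ-subalgebra of ℂ[X₁, X₂, X₃] generated by X₁², X₂², X₃² such that (P_ζ·h)(f) ≠ (P_ζ·h)(g). -/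
open MvPolynomial

/-- The atypicality polynomial `P_ζ` of `D(2|1;ζ)`: the product of the four linear forms
obtained by pairing a ρ-shifted weight with the four positive odd roots. -/
noncomputable def Pzeta (ζ : ℂ) : MvPolynomial (Fin 3) ℂ :=
  ∏ s ∈ ({1, -1} : Finset ℤ), ∏ t ∈ ({1, -1} : Finset ℤ),
    (C (1 + ζ) * X 0 + C (s : ℂ) * X 1 + C ((t : ℂ) * ζ) * X 2)

/-- If `f, g ∈ ℂ³` are typical weights (`P_ζ(f) ≠ 0 ≠ P_ζ(g)`) whose Weyl group orbits
(sign changes of coordinates) are disjoint, then some element `P_ζ · h` of the image of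
the Harish-Chandra homomorphism, with `h` a polynomial in the squares of the coordinates,
separates `f` and `g`. -/
theorem separate_typical_weights (ζ : ℂ) (hζ0 : ζ ≠ 0) (hζ1 : ζ ≠ -1)
    (f g : Fin 3 → ℂ)
    (hf : MvPolynomial.eval f (Pzeta ζ) ≠ 0)
    (hg : MvPolynomial.eval g (Pzeta ζ) ≠ 0)
    (hfg : ∀ s₁ s₂ s₃ : ℂ, (s₁ = 1 ∨ s₁ = -1) → (s₂ = 1 ∨ s₂ = -1) → (s₃ = 1 ∨ s₃ = -1) →
      ¬ (g 0 = s₁ * f 0 ∧ g 1 = s₂ * f 1 ∧ g 2 = s₃ * f 2)) :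
    ∃ h ∈ Algebra.adjoin ℂ ({X 0 ^ 2, X 1 ^ 2, X 2 ^ 2} : Set (MvPolynomial (Fin 3) ℂ)),
      MvPolynomial.eval f (Pzeta ζ * h) ≠ MvPolynomial.eval g (Pzeta ζ * h) := by
  -- There is a coordinate whose square differs.
  have key : ∃ i : Fin 3, g i ^ 2 ≠ f i ^ 2 := by
    by_contra hc
    push_neg at hc
    have hs : ∀ i, ∃ s : ℂ, (s = 1 ∨ s = -1) ∧ g i = s * f i := by
      intro i
      have h := hc i
      rw [sq, sq, mul_self_eq_mul_self_iff] at h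
      rcases h with h | h
      · exact ⟨1, Or.inl rfl, by rw [one_mul, h]⟩
      · exact ⟨-1, Or.inr rfl, by rw [neg_one_mul, h]⟩
    obtain ⟨s0, hs0, he0⟩ := hs 0
    obtain ⟨s1, hs1, he1⟩ := hs 1
    obtain ⟨s2, hs2, he2⟩ := hs 2
    exact hfg s0 s1 s2 hs0 hs1 hs2 ⟨he0, he1, he2⟩
  obtain ⟨i, hi⟩ := key
  refine ⟨X i ^ 2 - C (g i ^ 2), ?_, ?_⟩
  · have hX : (X i ^ 2 : MvPolynomial (Fin 3) ℂ) ∈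
        Algebra.adjoin ℂ ({X 0 ^ 2, X 1 ^ 2, X 2 ^ 2} : Set (MvPolynomial (Fin 3) ℂ)) := by
      apply Algebra.subset_adjoin
      fin_cases i <;> simp
    have hC : (C (g i ^ 2) : MvPolynomial (Fin 3) ℂ) ∈
        Algebra.adjoin ℂ ({X 0 ^ 2, X 1 ^ 2, X 2 ^ 2} : Set (MvPolynomial (Fin 3) ℂ)) := by
      rw [← MvPolynomial.algebraMap_eq]
      exact Subalgebra.algebraMap_mem _ _
    exact Subalgebra.sub_mem _ hX hC
  · simp only [eval_mul, eval_sub, eval_pow, eval_X, eval_C, sub_self, mul_zero]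
    exact mul_ne_zero hf (sub_ne_zero.mpr (fun h => hi h.symm))
end
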